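/- For any k ∈ ℕ∖{0}, the minimum depth of a deterministic decision tree for the table T_k satisfies h^d(T_k) ≥ k − 1. -/

import Mathlib

open Classical

noncomputable section

/-- A decision table with many-valued decisions over `E_k = {0,…,k-1}`.
Columns are labeled with attributes `f_i` identified with their indices `i : ℕ`;
a row is a function `ℕ → ℕ` supported on the attribute set, with values `< k`;
each row is labeled with a nonempty finite set of decisions. -/
structure Table (k : ℕ) where
  attrs : Finset ℕ
  rows : Finset (ℕ → ℕ)
  dec : (ℕ → ℕ) → Finset ℕ
  rows_mem : ∀ r ∈ rows, (∀ i ∈ attrs, r i < k) ∧ (∀ i ∉ attrs, r i = 0)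
  dec_nonempty : ∀ r ∈ rows, (dec r).Nonempty

namespace Table

variable {k : ℕ}

/-- a row satisfies a word (a list of (attribute, value) pairs) -/
def rowSat (r : ℕ → ℕ) (α : List (ℕ × ℕ)) : Prop := ∀ q ∈ α, r q.1 = q.2

/-- the word belongs to `Ω_k(T)` -/
def wordOk (T : Table k) (α : List (ℕ × ℕ)) : Prop := ∀ q ∈ α, q.1 ∈ T.attrs ∧ q.2 < k

/-- the subtable `Tα` -/
def applyWord (T : Table k) (α : List (ℕ × ℕ)) : Table k where
  attrs := T.attrs
  rows := T.rows.filter (fun r => rowSat r α)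
  dec := T.dec
  rows_mem := fun r hr => T.rows_mem r (Finset.mem_filter.mp hr).1
  dec_nonempty := fun r hr => T.dec_nonempty r (Finset.mem_filter.mp hr).1

/-- `T ∈ M_k^{∞c}` : the table has a common decision -/
def hasCommon (T : Table k) : Prop := ∃ d : ℕ, ∀ r ∈ T.rows, d ∈ T.dec r

/-- `N(T)` : number of rows -/
def NT (T : Table k) : ℕ := T.rows.card

/-- `W(T)` : number of columns (`0` for the empty table `Λ`) -/
def WT (T : Table k) : ℕ := if T.rows = ∅ then 0 else T.attrs.card

/-- the closure `[T]` of `T` under removal of columns and changing of decisions: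
`Q = J(ν, I(D,T))` for some `D ⊆ At(T)` and some `ν` (the decision labeling of `Q`
on its rows is arbitrary, i.e. is the arbitrary `ν` with nonempty finite values). -/
def closureT (T : Table k) : Set (Table k) :=
  {Q | ∃ D : Finset ℕ, D ⊆ T.attrs ∧ Q.attrs = T.attrs \ D ∧
      Q.rows = T.rows.image (fun r i => if i ∈ T.attrs \ D then r i else 0)}

end Table

/-- a closed class: `[A] = A` -/
def IsClosedClass {k : ℕ} (A : Set (Table k)) : Prop := ∀ T ∈ A, Table.closureT T ⊆ A

/-- a nontrivial class: contains nonempty tables -/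
def NontrivialClass {k : ℕ} (A : Set (Table k)) : Prop := ∃ T ∈ A, T.rows.Nonempty

/-- the part of a `k`-decision tree below one edge leaving the root -/
inductive DTree (k : ℕ) : Type
  | leaf (d : ℕ) : DTree k
  | node (a : ℕ) (n : ℕ) (lab : Fin (n + 1) → ℕ) (ch : Fin (n + 1) → DTree k) : DTree k

namespace DTree

variable {k : ℕ}

/-- the set of pairs (π(τ), terminal decision) over complete paths τ -/
def paths : DTree k → Set (List (ℕ × ℕ) × ℕ)
  | leaf d => {([], d)}
  | node a _ lab ch =>
      ⋃ i, (fun p : List (ℕ × ℕ) × ℕ => ((a, lab i) :: p.1, p.2)) '' paths (ch i)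

/-- edge labels belong to `E_k` -/
def wf : DTree k → Prop
  | leaf _ => True
  | node _ _ lab ch => (∀ i, lab i < k) ∧ ∀ i, wf (ch i)

/-- edges leaving any node are labeled with pairwise different numbers -/
def det : DTree k → Prop
  | leaf _ => True
  | node _ _ lab ch => Function.Injective lab ∧ ∀ i, det (ch i)

/-- the set of attributes attached to nodes -/
def attrs : DTree k → Finset ℕ
  | leaf _ => ∅
  | node a _ _ ch => insert a (Finset.univ.biUnion fun i => attrs (ch i))

end DTree

/-- a `k`-decision tree: an unlabeled root with `n+1` unlabeled edges leaving it -/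
structure KTree (k : ℕ) where
  n : ℕ
  sub : Fin (n + 1) → DTree k

namespace KTree

variable {k : ℕ}

def paths (Γ : KTree k) : Set (List (ℕ × ℕ) × ℕ) := ⋃ i, (Γ.sub i).paths

def wf (Γ : KTree k) : Prop := ∀ i, (Γ.sub i).wf

def attrs (Γ : KTree k) : Finset ℕ := Finset.univ.biUnion fun i => (Γ.sub i).attrs

end KTree

/-- partially bounded complexity measure on words over `P` -/
structure PBCM where
  toFun : List ℕ → ℕ
  pos : ∀ α, toFun α = 0 ↔ α = []
  perm : ∀ α β, List.Perm α β → toFun α = toFun β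
  mono : ∀ α β, toFun α ≤ toFun (α ++ β)
  subadd : ∀ α β, toFun (α ++ β) ≤ toFun α + toFun β

/-- bounded complexity measure -/
structure BCM extends PBCM where
  bdd : ∀ α, α.length ≤ toFun α

/-- extension of ψ to words over pairs `(f_i, δ)` -/
def PBCM.onWord (ψ : PBCM) (α : List (ℕ × ℕ)) : ℕ := ψ.toFun (α.map Prod.fst)

/-- extension of ψ to finite sets of attributes -/
def PBCM.onSet (ψ : PBCM) (s : Finset ℕ) : ℕ := ψ.toFun (s.sort (· ≤ ·))

/-- the depth `h` -/
def depthCM : BCM where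
  toFun := List.length
  pos := fun α => List.length_eq_zero_iff
  perm := fun _ _ h => h.length_eq
  mono := fun α β => by simp
  subadd := fun α β => by simp
  bdd := fun _ => le_rfl

/-- `ψ(Γ)` : complexity of a decision tree -/
def treeComp {k : ℕ} (ψ : PBCM) (Γ : KTree k) : ℕ :=
  sSup {c | ∃ p ∈ Γ.paths, ψ.onWord p.1 = c}

/-- `Γ` is a nondeterministic decision tree for the (nonempty) table `T` -/
def isNDT {k : ℕ} (T : Table k) (Γ : KTree k) : Prop :=
  T.rows.Nonempty ∧ Γ.wf ∧ Γ.attrs ⊆ T.attrs ∧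
  (∀ r ∈ T.rows, ∃ p ∈ Γ.paths, Table.rowSat r p.1) ∧
  (∀ p ∈ Γ.paths, (T.applyWord p.1).rows = ∅ ∨ ∀ r ∈ (T.applyWord p.1).rows, p.2 ∈ T.dec r)

/-- `Γ` is a deterministic decision tree for `T` -/
def isDDT {k : ℕ} (T : Table k) (Γ : KTree k) : Prop :=
  isNDT T Γ ∧ Γ.n = 0 ∧ ∀ i, (Γ.sub i).det

/-- `ψ^a(T)` -/
def psiA {k : ℕ} (ψ : PBCM) (T : Table k) : ℕ :=
  sInf {c | ∃ Γ : KTree k, isNDT T Γ ∧ treeComp ψ Γ = c}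

/-- `ψ^d(T)` -/
def psiD {k : ℕ} (ψ : PBCM) (T : Table k) : ℕ :=
  sInf {c | ∃ Γ : KTree k, isDDT T Γ ∧ treeComp ψ Γ = c}

/-- `m_ψ(T)` -/
def mpsi {k : ℕ} (ψ : PBCM) (T : Table k) : ℕ :=
  if T.rows = ∅ then 0 else T.attrs.sup fun i => ψ.toFun [i]

/-- `W_ψ(T)` -/
def Wpsi {k : ℕ} (ψ : PBCM) (T : Table k) : ℕ :=
  if T.rows = ∅ then 0 else ψ.onSet T.attrs

/-- a tuple `δ̄ ∈ E_k^{|At(T)|}` -/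
def validTuple {k : ℕ} (T : Table k) (δ : ℕ → ℕ) : Prop :=
  (∀ i ∈ T.attrs, δ i < k) ∧ ∀ i ∉ T.attrs, δ i = 0

/-- `M_ψ(T, δ̄)` -/
def MpsiAt {k : ℕ} (ψ : PBCM) (T : Table k) (δ : ℕ → ℕ) : ℕ :=
  sInf {p | ∃ s : Finset ℕ, s ⊆ T.attrs ∧
    (T.applyWord ((s.sort (· ≤ ·)).map fun i => (i, δ i))).hasCommon ∧ ψ.onSet s = p}

/-- `M_ψ(T)` -/
def Mpsi {k : ℕ} (ψ : PBCM) (T : Table k) : ℕ :=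
  if T.hasCommon then 0 else sSup {p | ∃ δ, validTuple T δ ∧ MpsiAt ψ T δ = p}

/-- `U` is a `(ψ,n)`-cover of `T` -/
def isCover {k : ℕ} (ψ : PBCM) (n : ℕ) (T : Table k) (U : Finset (List (ℕ × ℕ))) : Prop :=
  (∀ α ∈ U, T.wordOk α ∧ ψ.onWord α ≤ n) ∧ ∀ r ∈ T.rows, ∃ α ∈ U, Table.rowSat r α

/-- `U` is an irreducible `(ψ,n)`-cover of `T` -/
def isIrredCover {k : ℕ} (ψ : PBCM) (n : ℕ) (T : Table k) (U : Finset (List (ℕ × ℕ))) : Prop :=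
  isCover ψ n T U ∧ ∀ V ⊂ U, ¬ isCover ψ n T V

/-- `l_ψ(T,n)` : maximum cardinality of an irreducible `(ψ,n)`-cover -/
def lpsi {k : ℕ} (ψ : PBCM) (T : Table k) (n : ℕ) : ℕ :=
  sSup {c | ∃ U, isIrredCover ψ n T U ∧ U.card = c}

/-- the set `{ψ^d(T) : T ∈ A, ψ^a(T) ≤ n}`; `H^∞_{ψ,A}(n)` is defined iff this set
is finite, and is then its maximum -/
def HSet {k : ℕ} (ψ : PBCM) (A : Set (Table k)) (n : ℕ) : Set ℕ :=
  {c | ∃ T ∈ A, psiA ψ T ≤ n ∧ psiD ψ T = c}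

/-- `H^∞_{ψ,A}(n)` (as the max = sSup of the finite set `HSet ψ A n`) -/
def Hfun {k : ℕ} (ψ : PBCM) (A : Set (Table k)) (n : ℕ) : ℕ := sSup (HSet ψ A n)

/-- the set `{l_ψ(T,n) : T ∈ A}` -/
def LSet {k : ℕ} (ψ : PBCM) (A : Set (Table k)) (n : ℕ) : Set ℕ :=
  {c | ∃ T ∈ A, lpsi ψ T n = c}

/-- `L_{ψ,A}(n)` -/
def Lfun {k : ℕ} (ψ : PBCM) (A : Set (Table k)) (n : ℕ) : ℕ := sSup (LSet ψ A n)

/-- `H_D` for an infinite `D ⊆ ℕ` : `H_D(n)` is the largest element of `D` that is `≤ n`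
(and `0` if there is none) -/
def HDfun (D : Set ℕ) (n : ℕ) : ℕ := sSup {d | d ∈ D ∧ d ≤ n}

/-- a complete table from `M_2^∞` -/
def isComplete (Q : Table 2) : Prop := Q.NT = 2 ^ Q.attrs.card

/-- `Z(T)` : maximum number of columns in a complete table from `[T]` (`0` if none) -/
def Zt (T : Table 2) : ℕ := sSup {c | ∃ Q ∈ Table.closureT T, isComplete Q ∧ Q.WT = c}

/-- the set `{Z(T) : T ∈ A_ψ(n)}` -/
def ZSet (ψ : PBCM) (A : Set (Table 2)) (n : ℕ) : Set ℕ :=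
  {c | ∃ T ∈ A, mpsi ψ T ≤ n ∧ Zt T = c}

/-- `Z_{ψ,A}(n)` -/
def Zfun (ψ : PBCM) (A : Set (Table 2)) (n : ℕ) : ℕ := sSup (ZSet ψ A n)

/-- annihilating word for `T` -/
def isAnnih (T : Table 2) (α : List (ℕ × ℕ)) : Prop :=
  T.wordOk α ∧ (∀ p ∈ α, ∀ q ∈ α, p.1 = q.1 → p.2 = q.2) ∧ (T.applyWord α).rows = ∅

/-- irreducible annihilating word for `T` -/
def isIrredAnnih (T : Table 2) (α : List (ℕ × ℕ)) : Prop :=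
  isAnnih T α ∧ ∀ β, β.Sublist α → β ≠ α → ¬ isAnnih T β

/-- `G(T)` : maximum length of an irreducible annihilating word (`0` if none) -/
def Gt (T : Table 2) : ℕ := sSup {c | ∃ α, isIrredAnnih T α ∧ α.length = c}

/-- the set `{G(T) : T ∈ A_ψ(n)}` -/
def GSet (ψ : PBCM) (A : Set (Table 2)) (n : ℕ) : Set ℕ :=
  {c | ∃ T ∈ A, mpsi ψ T ≤ n ∧ Gt T = c}

/-- `G_{ψ,A}(n)` -/
def Gfun (ψ : PBCM) (A : Set (Table 2)) (n : ℕ) : ℕ := sSup (GSet ψ A n)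

/-! ### The tables `T_k` and `T_k^*` built from the triangle-shaped graph `G_k` -/

/-- `m(k) = k(k+1)/2` : number of nodes of `G_k` -/
def mnum (k : ℕ) : ℕ := k * (k + 1) / 2

/-- the layer of node `i` of `G_k` : the unique `L` with `m(L-1) < i ≤ m(L)` -/
def layer (i : ℕ) : ℕ := sInf {L | i ≤ mnum L}

/-- left child `l(i) = i + layer i`; right child `p(i) = i + layer i + 1` -/
def lchild (i : ℕ) : ℕ := i + layer i

def rchild (i : ℕ) : ℕ := i + layer i + 1

/-- the map `ν_k : E_2^{m(k)} → P(ω)` -/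
def nuk (k : ℕ) (δ : ℕ → ℕ) : Finset ℕ :=
  (Finset.range (mnum k + 1)).filter fun i =>
    if i = 0 then δ 1 = 0
    else if layer i = k then δ i = 1
    else δ i = 1 ∧ δ (lchild i) = 0 ∧ δ (rchild i) = 0

/-- all tuples over `E_k` supported on the attribute set `s` -/
def allRows (k : ℕ) (s : Finset ℕ) : Finset (ℕ → ℕ) :=
  (s.pi fun _ => Finset.range k).image fun f i => if h : i ∈ s then f i h else 0

/-- the table with attribute set `s`, all possible rows, and decision labeling `d` -/
def fullTable (k : ℕ) (s : Finset ℕ) (d : (ℕ → ℕ) → Finset ℕ) : Table k where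
  attrs := s
  rows := allRows k s
  dec := fun r => if (d r).Nonempty then d r else {0}
  rows_mem := by
    intro r hr
    simp only [allRows, Finset.mem_image] at hr
    obtain ⟨f, hf, rfl⟩ := hr
    refine ⟨fun i hi => ?_, fun i hi => ?_⟩
    · have h := (Finset.mem_pi.mp hf) i hi
      simp only [Finset.mem_range] at h
      simpa [hi] using h
    · simp [hi]
  dec_nonempty := by
    intro r _
    by_cases h : (d r).Nonempty
    · simp [h]
    · simp [h]

/-- the complete table `T_k` with `m(k)` columns `f_1, …, f_{m(k)}` and `2^{m(k)}` rows,
each row `δ̄` labeled with `ν_k(δ̄)` (which is always nonempty) -/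
def Tk (k : ℕ) : Table 2 := fullTable 2 (Finset.Icc 1 (mnum k)) (nuk k)

/-- the `j`-th node of the complete path of `G_k` determined by the choices `c` -/
def pathNode (c : ℕ → Bool) : ℕ → ℕ
  | 0 => 1
  | j + 1 => if c j then lchild (pathNode c j) else rchild (pathNode c j)

/-- `T_k^*` : the subtable of `T_k` whose rows are exactly the characteristic tuples
of complete paths of `G_k` -/
def Tstar (k : ℕ) : Table 2 where
  attrs := (Tk k).attrs
  rows := (Tk k).rows.filter fun r =>
    ∃ c : ℕ → Bool, ∀ i ∈ Finset.Icc 1 (mnum k), (r i = 1 ↔ ∃ j < k, pathNode c j = i)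
  dec := (Tk k).dec
  rows_mem := fun r hr => (Tk k).rows_mem r (Finset.mem_filter.mp hr).1
  dec_nonempty := fun r hr => (Tk k).dec_nonempty r (Finset.mem_filter.mp hr).1

/-- `r(T)` for a subtable `T` of `T_k^*` : the number of distinct decision sets
`ν_k(δ̄)` among the rows `δ̄` of `T` -/
def rnum (k : ℕ) (T : Table 2) : ℕ := (T.rows.image (nuk k)).card

end

/-!
Restrict attention to the rows of `T_k` that are characteristic vectors of complete paths of
`G_k`: the only decision of such a row is the bottom node of its path. An adversary answers
every query `0` unless all paths avoiding the nodes already answered `0` pass through the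
queried node. Then some path always avoids the set `Z` of `0`-answers, `|Z|` is at most the
number of queries, and every such path is consistent with the answers. While `|Z| ≤ k - 2`
there are two such paths with different bottom nodes, so the subtable reached has no common
decision and a deterministic tree cannot stop yet.
-/

namespace Table

variable {k : ℕ}

lemma rowSat_append {r : ℕ → ℕ} {w w' : List (ℕ × ℕ)} :
    rowSat r (w ++ w') ↔ rowSat r w ∧ rowSat r w' :=
  List.forall_mem_append

lemma mem_applyWord_rows {T : Table k} {w : List (ℕ × ℕ)} {r : ℕ → ℕ} :
    r ∈ (T.applyWord w).rows ↔ r ∈ T.rows ∧ rowSat r w :=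
  Finset.mem_filter

lemma eq_of_rowSat {T : Table k} {w : List (ℕ × ℕ)} (hw : ∀ i ∈ T.attrs, ∃ v, (i, v) ∈ w)
    {r r' : ℕ → ℕ} (hr : r ∈ T.rows) (hr' : r' ∈ T.rows) (hrw : rowSat r w)
    (hrw' : rowSat r' w) : r = r' := by
  funext i
  by_cases hi : i ∈ T.attrs
  · obtain ⟨v, hv⟩ := hw i hi
    exact (hrw _ hv).trans (hrw' _ hv).symm
  · rw [(T.rows_mem r hr).2 i hi, (T.rows_mem r' hr').2 i hi]

end Table

namespace DTree

variable {k : ℕ}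

lemma mem_paths_node {a n : ℕ} {lab : Fin (n + 1) → ℕ} {ch : Fin (n + 1) → DTree k}
    {p : List (ℕ × ℕ) × ℕ} :
    p ∈ (node a n lab ch).paths ↔ ∃ i, ∃ q ∈ (ch i).paths, ((a, lab i) :: q.1, q.2) = p := by
  simp only [paths, Set.mem_iUnion, Set.mem_image]

lemma paths_finite : ∀ t : DTree k, t.paths.Finite
  | leaf _ => Set.finite_singleton _
  | node _ _ _ ch => Set.finite_iUnion fun i => (paths_finite (ch i)).image _

end DTree

lemma le_treeComp {k : ℕ} (ψ : PBCM) {Γ : KTree k} {p : List (ℕ × ℕ) × ℕ} (hp : p ∈ Γ.paths) :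
    ψ.onWord p.1 ≤ treeComp ψ Γ :=
  le_csSup ((Set.finite_iUnion fun i => (Γ.sub i).paths_finite).image _).bddAbove ⟨p, hp, rfl⟩

lemma depthCM_onWord (α : List (ℕ × ℕ)) : depthCM.onWord α = α.length :=
  List.length_map _

structure Table.Adversary {k : ℕ} (T : Table k) (m : ℕ) where
  Safe : List (ℕ × ℕ) → Prop
  safe_nil : Safe []
  safe_extend : ∀ w a, Safe w → ∃ v, Safe (w ++ [(a, v)])
  nonempty : ∀ w, Safe w → (T.applyWord w).rows.Nonempty
  not_hasCommon : ∀ w, Safe w → w.length < m → ¬ (T.applyWord w).hasCommon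

namespace Table.Adversary

variable {k m : ℕ} {T : Table k}

lemma rows_nonempty (A : T.Adversary m) : T.rows.Nonempty :=
  (A.nonempty [] A.safe_nil).mono (Finset.filter_subset _ _)

lemma exists_long_path (A : T.Adversary m) :
    ∀ (t : DTree k) (w : List (ℕ × ℕ)), t.det → A.Safe w →
    (∀ r ∈ (T.applyWord w).rows, ∃ p ∈ t.paths, rowSat r p.1) →
    (∀ p ∈ t.paths, (T.applyWord (w ++ p.1)).hasCommon) →
    ∃ p ∈ t.paths, m ≤ w.length + p.1.length
  | .leaf d, w, _, hw, _, hleaf => by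
    refine ⟨([], d), rfl, ?_⟩
    by_contra hlt
    exact A.not_hasCommon w hw (by simpa using hlt) (by simpa using hleaf ([], d) rfl)
  | .node a n lab ch, w, ⟨hinj, hdet⟩, hw, hcover, hleaf => by
    obtain ⟨v, hv⟩ := A.safe_extend w a hw
    have hedge : ∀ r ∈ (T.applyWord (w ++ [(a, v)])).rows,
        ∃ i, lab i = v ∧ ∃ q ∈ (ch i).paths, rowSat r q.1 := by
      intro r hr
      obtain ⟨hrT, hrw⟩ := mem_applyWord_rows.1 hr
      obtain ⟨hrw, hra⟩ := rowSat_append.1 hrw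
      obtain ⟨_, hp, hrp⟩ := hcover r (mem_applyWord_rows.2 ⟨hrT, hrw⟩)
      obtain ⟨i, q, hq, rfl⟩ := DTree.mem_paths_node.1 hp
      obtain ⟨hri, hrq⟩ := List.forall_mem_cons.1 hrp
      exact ⟨i, hri.symm.trans (hra _ (List.mem_singleton_self _)), q, hq, hrq⟩
    obtain ⟨r₀, hr₀⟩ := A.nonempty _ hv
    obtain ⟨i, hi, -⟩ := hedge r₀ hr₀
    have hcover' : ∀ r ∈ (T.applyWord (w ++ [(a, v)])).rows,
        ∃ q ∈ (ch i).paths, rowSat r q.1 := by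
      intro r hr
      obtain ⟨j, hj, hq⟩ := hedge r hr
      rwa [hinj (hj.trans hi.symm)] at hq
    have hleaf' : ∀ q ∈ (ch i).paths, (T.applyWord (w ++ [(a, v)] ++ q.1)).hasCommon := by
      intro q hq
      simpa [← hi] using hleaf _ (DTree.mem_paths_node.2 ⟨i, q, hq, rfl⟩)
    obtain ⟨q, hq, hlen⟩ := A.exists_long_path (ch i) _ (hdet i) hv hcover' hleaf'
    refine ⟨_, DTree.mem_paths_node.2 ⟨i, q, hq, rfl⟩, ?_⟩
    simp only [List.length_append, List.length_singleton] at hlen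
    simp only [List.length_cons]
    omega

lemma le_treeComp_of_isDDT (A : T.Adversary m) {Γ : KTree k} (hΓ : isDDT T Γ) :
    m ≤ treeComp depthCM.toPBCM Γ := by
  obtain ⟨⟨-, -, -, hcover, hleaf⟩, hn, hdet⟩ := hΓ
  obtain ⟨n, sub⟩ := Γ
  obtain rfl : n = 0 := hn
  have hpaths : KTree.paths ⟨0, sub⟩ = (sub 0).paths :=
    iSup_unique (ι := Fin 1) fun i => (sub i).paths
  rw [hpaths] at hcover hleaf
  obtain ⟨p, hp, hlen⟩ := A.exists_long_path (sub 0) [] (hdet 0) A.safe_nil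
    (fun r hr => hcover r (mem_applyWord_rows.1 hr).1)
    (fun p hp => (hleaf p hp).elim (fun h => ⟨0, by simp [h]⟩) fun h => ⟨p.2, h⟩)
  calc m ≤ p.1.length := by simpa using hlen
    _ = depthCM.onWord p.1 := (depthCM_onWord _).symm
    _ ≤ _ := le_treeComp _ (hpaths ▸ hp)

end Table.Adversary

namespace Table

variable {n : ℕ} (T : Table (n + 1))

noncomputable def someDecision (w : List (ℕ × ℕ)) : ℕ :=
  if h : (T.applyWord w).rows.Nonempty then
    (T.dec_nonempty _ (mem_applyWord_rows.1 h.choose_spec).1).choose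
  else 0

lemma someDecision_mem_dec {w : List (ℕ × ℕ)} (hw : ∀ i ∈ T.attrs, ∃ v, (i, v) ∈ w)
    {r : ℕ → ℕ} (hr : r ∈ (T.applyWord w).rows) : T.someDecision w ∈ T.dec r := by
  have h : (T.applyWord w).rows.Nonempty := ⟨r, hr⟩
  obtain ⟨hrT, hrw⟩ := mem_applyWord_rows.1 hr
  obtain ⟨hT, hw'⟩ := mem_applyWord_rows.1 h.choose_spec
  rw [someDecision, dif_pos h, eq_of_rowSat hw hrT hT hrw hw']
  exact Exists.choose_spec _

/-- Queries the attributes of `L` in order; `w` records the answers given so far. -/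
noncomputable def queryAll : List ℕ → List (ℕ × ℕ) → DTree (n + 1)
  | [], w => .leaf (T.someDecision w)
  | a :: L, w => .node a n Fin.val fun i => queryAll L (w ++ [(a, (i : ℕ))])

lemma queryAll_det : ∀ L w, (T.queryAll L w).det
  | [], _ => trivial
  | _ :: L, _ => ⟨Fin.val_injective, fun _ => queryAll_det L _⟩

lemma queryAll_wf : ∀ L w, (T.queryAll L w).wf
  | [], _ => trivial
  | _ :: L, _ => ⟨Fin.isLt, fun _ => queryAll_wf L _⟩

lemma attrs_queryAll_subset : ∀ L w, (T.queryAll L w).attrs ⊆ L.toFinset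
  | [], _ => Finset.empty_subset _
  | a :: L, w => by
    refine Finset.insert_subset (by simp) (Finset.biUnion_subset.2 fun i _ => ?_)
    exact (attrs_queryAll_subset L _).trans (by intro x; simp +contextual)

lemma exists_mem_paths_queryAll {r : ℕ → ℕ} (hr : r ∈ T.rows) :
    ∀ L w, (∀ a ∈ L, a ∈ T.attrs) → ∃ p ∈ (T.queryAll L w).paths, rowSat r p.1
  | [], w, _ => ⟨([], _), rfl, fun _ h => absurd h List.not_mem_nil⟩
  | a :: L, w, hL => by
    obtain ⟨q, hq, hrq⟩ := exists_mem_paths_queryAll hr L (w ++ [(a, r a)])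
      fun b hb => hL b (List.mem_cons_of_mem a hb)
    let i : Fin (n + 1) := ⟨r a, (T.rows_mem r hr).1 a (hL a List.mem_cons_self)⟩
    exact ⟨_, DTree.mem_paths_node.2 ⟨i, q, hq, rfl⟩, List.forall_mem_cons.2 ⟨rfl, hrq⟩⟩

lemma dec_of_mem_paths_queryAll : ∀ L w, (∀ i ∈ T.attrs, i ∈ L ∨ ∃ v, (i, v) ∈ w) →
    ∀ p ∈ (T.queryAll L w).paths, ∀ r ∈ (T.applyWord (w ++ p.1)).rows, p.2 ∈ T.dec r
  | [], w, hw, _, rfl, r, hr => by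
    refine T.someDecision_mem_dec (fun i hi => ?_) (by simpa using hr)
    simpa using hw i hi
  | a :: L, w, hw, _, hp, r, hr => by
    obtain ⟨i, q, hq, rfl⟩ := DTree.mem_paths_node.1 hp
    refine dec_of_mem_paths_queryAll L (w ++ [(a, (i : ℕ))]) (fun j hj => ?_) q hq r
      (by simpa using hr)
    rcases hw j hj with hj | ⟨v, hv⟩
    · rcases List.mem_cons.1 hj with rfl | hjL
      · exact Or.inr ⟨i, by simp⟩
      · exact Or.inl hjL
    · exact Or.inr ⟨v, by simp [hv]⟩

theorem exists_isDDT (h : T.rows.Nonempty) : ∃ Γ, isDDT T Γ := by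
  let L := T.attrs.sort (· ≤ ·)
  refine ⟨⟨0, fun _ => T.queryAll L []⟩, ⟨h, fun _ => T.queryAll_wf L [], ?_, ?_, ?_⟩, rfl,
    fun _ => T.queryAll_det L []⟩
  · exact Finset.biUnion_subset.2 fun _ _ => (T.attrs_queryAll_subset L []).trans (by simp [L])
  · intro r hr
    obtain ⟨p, hp, hrp⟩ := T.exists_mem_paths_queryAll hr L [] (by simp [L])
    exact ⟨p, Set.mem_iUnion.2 ⟨0, hp⟩, hrp⟩
  · intro p hp
    obtain ⟨_, hp⟩ := Set.mem_iUnion.1 hp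
    exact Or.inr fun r hr =>
      T.dec_of_mem_paths_queryAll L [] (by simp [L]) p hp r (by simpa using hr)

end Table

theorem Table.Adversary.le_psiD {n m : ℕ} {T : Table (n + 1)} (A : T.Adversary m) :
    m ≤ psiD depthCM.toPBCM T := by
  obtain ⟨Γ₀, hΓ₀⟩ := T.exists_isDDT A.rows_nonempty
  exact le_csInf ⟨_, Γ₀, hΓ₀, rfl⟩ fun _ ⟨Γ, hΓ, hc⟩ => hc ▸ A.le_treeComp_of_isDDT hΓ

lemma mnum_succ (j : ℕ) : mnum (j + 1) = mnum j + (j + 1) := by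
  unfold mnum
  rw [show (j + 1) * (j + 1 + 1) = j * (j + 1) + 2 * (j + 1) by ring]
  omega

lemma mnum_mono : Monotone mnum :=
  fun _ _ h => Nat.div_le_div_right (Nat.mul_le_mul h (Nat.succ_le_succ h))

lemma layer_mnum_add {j c : ℕ} (hc : 1 ≤ c) (hcj : c ≤ j + 1) : layer (mnum j + c) = j + 1 := by
  have hmem : j + 1 ∈ {L | mnum j + c ≤ mnum L} :=
    show mnum j + c ≤ mnum (j + 1) by rw [mnum_succ]; omega
  refine le_antisymm (Nat.sInf_le hmem) (le_csInf ⟨_, hmem⟩ fun L (hL : mnum j + c ≤ mnum L) => ?_)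
  by_contra! h
  have := mnum_mono (Nat.le_of_lt_succ h)
  omega

/-- The position of `pathNode c j` within its layer `j + 1`, counted from `1`. -/
def pathCol (c : ℕ → Bool) : ℕ → ℕ
  | 0 => 1
  | j + 1 => if c j then pathCol c j else pathCol c j + 1

section PathCol

variable (c : ℕ → Bool)

lemma pathCol_succ_le (j : ℕ) : pathCol c (j + 1) ≤ pathCol c j + 1 := by
  simp only [pathCol]; split <;> omega

lemma le_pathCol_succ (j : ℕ) : pathCol c j ≤ pathCol c (j + 1) := by
  simp only [pathCol]; split <;> omega

lemma pathCol_mono : Monotone (pathCol c) :=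
  monotone_nat_of_le_succ (le_pathCol_succ c)

lemma pathCol_le_add {i j : ℕ} (h : i ≤ j) : pathCol c j ≤ pathCol c i + (j - i) := by
  induction j, h using Nat.le_induction with
  | base => simp
  | succ j hij ih => have := pathCol_succ_le c j; omega

lemma one_le_pathCol (j : ℕ) : 1 ≤ pathCol c j :=
  pathCol_mono c (Nat.zero_le j)

lemma pathCol_le (j : ℕ) : pathCol c j ≤ j + 1 := by
  have := pathCol_le_add c (Nat.zero_le j)
  simp only [pathCol] at this
  omega

lemma pathNode_eq (j : ℕ) : pathNode c j = mnum j + pathCol c j := by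
  induction j with
  | zero => rfl
  | succ j ih =>
    have hlayer : layer (pathNode c j) = j + 1 := by
      rw [ih]; exact layer_mnum_add (one_le_pathCol c j) (pathCol_le c j)
    simp only [pathNode, pathCol, lchild, rchild, hlayer, mnum_succ]
    split <;> omega

lemma layer_pathNode (j : ℕ) : layer (pathNode c j) = j + 1 := by
  rw [pathNode_eq]; exact layer_mnum_add (one_le_pathCol c j) (pathCol_le c j)

lemma pathNode_mem_Icc {k j : ℕ} (hj : j < k) : pathNode c j ∈ Finset.Icc 1 (mnum k) := by
  have := one_le_pathCol c j
  have := pathCol_le c j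
  have := mnum_mono (Nat.succ_le_of_lt hj)
  rw [mnum_succ] at this
  rw [pathNode_eq, Finset.mem_Icc]
  omega

lemma eq_of_pathNode_eq {c' : ℕ → Bool} {j j' : ℕ} (h : pathNode c j = pathNode c' j') :
    j = j' ∧ pathCol c j = pathCol c' j := by
  have hj : j = j' :=
    Nat.succ_injective ((layer_pathNode c j).symm.trans (h ▸ layer_pathNode c' j'))
  subst hj
  rw [pathNode_eq, pathNode_eq] at h
  exact ⟨rfl, by omega⟩

lemma pathNode_succ_eq_child (j : ℕ) :
    pathNode c (j + 1) = lchild (pathNode c j) ∨ pathNode c (j + 1) = rchild (pathNode c j) := by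
  simp only [pathNode]; split <;> simp

end PathCol

lemma mem_allRows {k : ℕ} {s : Finset ℕ} {r : ℕ → ℕ} :
    r ∈ allRows k s ↔ (∀ i ∈ s, r i < k) ∧ ∀ i ∉ s, r i = 0 := by
  refine ⟨(fullTable k s fun _ => ∅).rows_mem r, fun ⟨hlt, hzero⟩ => ?_⟩
  refine Finset.mem_image.2
    ⟨fun i _ => r i, Finset.mem_pi.2 fun i hi => Finset.mem_range.2 (hlt i hi), ?_⟩
  funext i
  by_cases hi : i ∈ s <;> simp [hi, hzero]

noncomputable def pathRow (k : ℕ) (c : ℕ → Bool) (i : ℕ) : ℕ :=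
  if ∃ j < k, pathNode c j = i then 1 else 0

section PathRow

variable {k : ℕ} (c : ℕ → Bool)

lemma pathRow_pathNode {j : ℕ} (hj : j < k) : pathRow k c (pathNode c j) = 1 :=
  if_pos ⟨j, hj, rfl⟩

lemma exists_pathNode_of_pathRow_eq_one {i : ℕ} (h : pathRow k c i = 1) :
    ∃ j < k, pathNode c j = i := by
  by_contra hi
  simp [pathRow, hi] at h

lemma pathRow_mem_rows : pathRow k c ∈ (Tk k).rows := by
  refine mem_allRows.2 ⟨fun i _ => ?_, fun i hi => if_neg ?_⟩
  · unfold pathRow; split <;> omega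
  · rintro ⟨j, hj, rfl⟩
    exact hi (pathNode_mem_Icc c hj)

lemma nuk_pathRow (hk : 1 ≤ k) : nuk k (pathRow k c) = {pathNode c (k - 1)} := by
  have hbottom := pathNode_mem_Icc c (Nat.sub_one_lt_of_le hk le_rfl)
  rw [Finset.mem_Icc] at hbottom
  ext d
  simp only [nuk, Finset.mem_filter, Finset.mem_range, Finset.mem_singleton]
  constructor
  · rintro ⟨-, hd⟩
    split_ifs at hd with h0 hlayer
    · have hroot : pathRow k c 1 = 1 := pathRow_pathNode (j := 0) c hk
      omega
    · obtain ⟨j, hj, rfl⟩ := exists_pathNode_of_pathRow_eq_one c hd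
      rw [layer_pathNode] at hlayer
      rw [show j = k - 1 by omega]
    · obtain ⟨hd, hl, hr⟩ := hd
      obtain ⟨j, hj, rfl⟩ := exists_pathNode_of_pathRow_eq_one c hd
      rw [layer_pathNode] at hlayer
      have hnext := pathRow_pathNode c (show j + 1 < k by omega)
      rcases pathNode_succ_eq_child c j with h | h <;> rw [h] at hnext <;> omega
  · rintro rfl
    refine ⟨by omega, ?_⟩
    rw [if_neg (by omega), if_pos (by rw [layer_pathNode]; omega)]
    exact pathRow_pathNode c (by omega)

lemma dec_pathRow (hk : 1 ≤ k) : (Tk k).dec (pathRow k c) = {pathNode c (k - 1)} := by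
  show (if (nuk k _).Nonempty then nuk k _ else {0}) = _
  rw [nuk_pathRow c hk, if_pos (Finset.singleton_nonempty _)]

end PathRow

def deviate (c : ℕ → Bool) (s i : ℕ) : Bool := if i < s then c i else !c s

section Deviate

variable (c : ℕ → Bool)

lemma pathCol_congr {c' : ℕ → Bool} : ∀ {j}, (∀ i < j, c i = c' i) → pathCol c j = pathCol c' j
  | 0, _ => rfl
  | j + 1, h => by
    have ih := pathCol_congr (j := j) fun i hi => h i (by omega)
    simp only [pathCol, h j j.lt_succ_self, ih]

lemma pathCol_deviate_of_le {s j : ℕ} (h : j ≤ s) : pathCol (deviate c s) j = pathCol c j :=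
  pathCol_congr _ fun _ hi => if_pos (by omega)

lemma pathCol_deviate {s j : ℕ} (h : s < j) :
    pathCol (deviate c s) j = if c s then pathCol c s + (j - s) else pathCol c s := by
  induction j, h using Nat.le_induction with
  | base =>
    simp only [pathCol, deviate, lt_irrefl, if_false, pathCol_deviate_of_le c le_rfl]
    cases c s <;> simp
  | succ j hsj ih =>
    simp only [pathCol, deviate, show ¬ j < s by omega, if_false, ih]
    cases c s
    · simp
    · simp; omega

lemma pathCol_deviate_ne {s j : ℕ} (h : s < j) : pathCol (deviate c s) j ≠ pathCol c j := by
  have hstep : pathCol c (s + 1) = if c s then pathCol c s else pathCol c s + 1 := rfl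
  have := pathCol_mono c (show s + 1 ≤ j by omega)
  have := pathCol_le_add c (show s + 1 ≤ j by omega)
  rw [pathCol_deviate c h]
  cases hcs : c s <;> simp [hcs] at hstep ⊢ <;> omega

lemma pathCol_deviate_injOn (j : ℕ) :
    Set.InjOn (fun s => pathCol (deviate c s) j) (Set.Iio j) := by
  have key : ∀ s s', s < s' → s' < j → pathCol (deviate c s) j ≠ pathCol (deviate c s') j := by
    intro s s' hss' hs'j
    have hstep : pathCol c (s + 1) = if c s then pathCol c s else pathCol c s + 1 := rfl
    have := pathCol_mono c (show s + 1 ≤ s' by omega)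
    have := pathCol_le_add c (show s + 1 ≤ s' by omega)
    rw [pathCol_deviate c (hss'.trans hs'j), pathCol_deviate c hs'j]
    cases hcs : c s <;> cases hcs' : c s' <;> simp [hcs] at hstep ⊢ <;> omega
  intro s hs s' hs' heq
  rcases lt_trichotomy s s' with h | h | h
  · exact absurd heq (key s s' h hs')
  · exact h
  · exact absurd heq.symm (key s' s h hs)

end Deviate

def PathAvoids (k : ℕ) (c : ℕ → Bool) (Z : Finset ℕ) : Prop := ∀ j < k, pathNode c j ∉ Z

/-- The `k - 1` deviations of `c` end elsewhere and, after leaving `c`, run through pairwise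
disjoint sets of nodes (distinct columns to the left of `c`, distinct diagonals to its right),
so `Z` cannot block all of them. -/
lemma exists_pathAvoids_ne {k : ℕ} {Z : Finset ℕ} {c : ℕ → Bool} (hc : PathAvoids k c Z)
    (hZ : Z.card + 1 < k) :
    ∃ c', PathAvoids k c' Z ∧ pathNode c' (k - 1) ≠ pathNode c (k - 1) := by
  by_contra! h
  have hhit : ∀ s < k - 1, ∃ j, s < j ∧ j < k ∧ pathNode (deviate c s) j ∈ Z := by
    intro s hs
    obtain ⟨j, hj, hjZ⟩ : ∃ j < k, pathNode (deviate c s) j ∈ Z := by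
      by_contra! hav
      have := pathCol_deviate_ne c hs
      have := h _ hav
      rw [pathNode_eq, pathNode_eq] at this
      omega
    refine ⟨j, ?_, hj, hjZ⟩
    by_contra! hjs
    rw [pathNode_eq, pathCol_deviate_of_le c hjs, ← pathNode_eq] at hjZ
    exact hc j hj hjZ
  choose! f hf using hhit
  have hinj : Set.InjOn (fun s => pathNode (deviate c s) (f s)) (Finset.range (k - 1)) := by
    intro s hs s' hs' heq
    simp only [Finset.coe_range, Set.mem_Iio] at hs hs'
    obtain ⟨hj, hcol⟩ := eq_of_pathNode_eq _ heq
    exact pathCol_deviate_injOn c (f s) (hf s hs).1 (hj ▸ (hf s' hs').1) hcol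
  have := Finset.card_le_card_of_injOn _ (fun s hs => (hf s (Finset.mem_range.1 hs)).2.2) hinj
  simp only [Finset.card_range] at this
  omega

/-- The adversary answers `0` unless every path avoiding the set `Z` of nodes answered `0`
so far passes through the queried node. -/
def PathSafe (k : ℕ) (w : List (ℕ × ℕ)) : Prop :=
  ∃ Z : Finset ℕ, Z.card ≤ w.length ∧ (∃ c, PathAvoids k c Z) ∧
    ∀ c, PathAvoids k c Z → Table.rowSat (pathRow k c) w

namespace PathSafe

variable {k : ℕ} {w : List (ℕ × ℕ)}

lemma extend (hw : PathSafe k w) (a : ℕ) : ∃ v, PathSafe k (w ++ [(a, v)]) := by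
  obtain ⟨Z, hZ, ⟨c₀, hc₀⟩, hsat⟩ := hw
  by_cases hall : ∀ c, PathAvoids k c Z → pathRow k c a = 1
  · refine ⟨1, Z, by simp only [List.length_append]; omega, ⟨c₀, hc₀⟩, fun c hc => ?_⟩
    exact Table.rowSat_append.2 ⟨hsat c hc, List.forall_mem_singleton.2 (hall c hc)⟩
  · obtain ⟨c₁, hc₁, ha⟩ : ∃ c, PathAvoids k c Z ∧ pathRow k c a ≠ 1 := by simpa using hall
    refine ⟨0, insert a Z, ?_, ⟨c₁, fun j hj hmem => ?_⟩, fun c hc => ?_⟩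
    · simp only [List.length_append, List.length_singleton]
      have := Finset.card_insert_le a Z
      omega
    · rcases Finset.mem_insert.1 hmem with h | h
      · exact ha (h ▸ pathRow_pathNode c₁ hj)
      · exact hc₁ j hj h
    · refine Table.rowSat_append.2 ⟨hsat c fun j hj h => hc j hj (Finset.mem_insert_of_mem h), ?_⟩
      refine List.forall_mem_singleton.2 (if_neg ?_)
      rintro ⟨j, hj, rfl⟩
      exact hc j hj (Finset.mem_insert_self _ _)

lemma nonempty (hw : PathSafe k w) : ((Tk k).applyWord w).rows.Nonempty := by
  obtain ⟨Z, -, ⟨c, hc⟩, hsat⟩ := hw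
  exact ⟨_, Table.mem_applyWord_rows.2 ⟨pathRow_mem_rows c, hsat c hc⟩⟩

lemma not_hasCommon (hw : PathSafe k w) (hlen : w.length < k - 1) :
    ¬ ((Tk k).applyWord w).hasCommon := by
  obtain ⟨Z, hZ, ⟨c₀, hc₀⟩, hsat⟩ := hw
  obtain ⟨c₁, hc₁, hne⟩ := exists_pathAvoids_ne hc₀ (by omega)
  rintro ⟨d, hd⟩
  have h₀ := hd _ (Table.mem_applyWord_rows.2 ⟨pathRow_mem_rows c₀, hsat c₀ hc₀⟩)
  have h₁ := hd _ (Table.mem_applyWord_rows.2 ⟨pathRow_mem_rows c₁, hsat c₁ hc₁⟩)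
  rw [Table.applyWord, dec_pathRow _ (by omega), Finset.mem_singleton] at h₀ h₁
  exact hne (h₁.symm.trans h₀)

end PathSafe

def pathAdversary (k : ℕ) : (Tk k).Adversary (k - 1) where
  Safe := PathSafe k
  safe_nil := ⟨∅, le_rfl, ⟨fun _ => true, fun _ _ => Finset.notMem_empty _⟩,
    fun _ _ _ h => absurd h List.not_mem_nil⟩
  safe_extend _ a hw := hw.extend a
  nonempty _ hw := hw.nonempty
  not_hasCommon _ hw := hw.not_hasCommon

theorem stmt12_general (k : ℕ) : k - 1 ≤ psiD depthCM.toPBCM (Tk k) :=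
  (pathAdversary k).le_psiD

/-- **Lemma (7M6).** For any `k ≥ 1`, `h^d(T_k) ≥ k − 1`. -/
theorem stmt12 (k : ℕ) (hk : 1 ≤ k) : k - 1 ≤ psiD depthCM.toPBCM (Tk k) :=
  stmt12_general k
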